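/- For every positive integer N: if N-a is even with 1 ≤ a < N, then Σ_{s=0}^{(N-a)/2} 2^{-N+a+2s} (-1/2)_s (-(N-a)/2)_s² (N-a-2s)! / s! = 2^{-N+a}(N-a)! · ((a-N+2)/2)_{(N-a)/2} / ((a-N+1)/2)_{(N-a)/2} = 0 whenever N - a ≥ 2. -/

import Mathlib

open Finset

noncomputable def poch (x : ℝ) (m : ℕ) : ℝ := (ascPochhammer ℝ m).eval x

noncomputable def TT (m s : ℕ) : ℝ :=
  (4 : ℝ) ^ s * poch (-(1 / 2)) s * poch (-(m : ℝ)) s * poch (-(m : ℝ)) s *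
    (Nat.factorial (2 * m - 2 * s)) / (Nat.factorial s)

lemma poch_succ (x : ℝ) (s : ℕ) : poch x (s + 1) = poch x s * (x + s) :=
  ascPochhammer_succ_eval s x

lemma TT_ratio (m s : ℕ) (hs : s < m) :
    TT m (s + 1) * (((s : ℝ) + 1) * (2 * m - 2 * s) * (2 * m - 2 * s - 1)) =
      TT m s * (2 * (2 * s - 1) * ((m : ℝ) - s) ^ 2) := by
  have h2 : 2 * s + 2 ≤ 2 * m := by omega
  have hfac : (Nat.factorial (2 * m - 2 * s) : ℝ) =
      ((2 * m - 2 * s : ℕ) : ℝ) * ((2 * m - 2 * s - 1 : ℕ) : ℝ) *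
        (Nat.factorial (2 * m - 2 * (s + 1)) : ℝ) := by
    have e1 : 2 * m - 2 * s = (2 * m - 2 * (s + 1)) + 1 + 1 := by omega
    have e2 : 2 * m - 2 * s - 1 = (2 * m - 2 * (s + 1)) + 1 := by omega
    rw [e1]
    rw [show 2 * m - 2 * (s + 1) + 1 + 1 - 1 = 2 * m - 2 * (s + 1) + 1 from by omega]
    rw [Nat.factorial_succ, Nat.factorial_succ]
    push_cast
    ring
  have hc1 : ((2 * m - 2 * s : ℕ) : ℝ) = 2 * (m : ℝ) - 2 * s := by
    have : 2 * s ≤ 2 * m := by omega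
    push_cast [Nat.cast_sub this]
    ring
  have hc2 : ((2 * m - 2 * s - 1 : ℕ) : ℝ) = 2 * (m : ℝ) - 2 * s - 1 := by
    have : 1 ≤ 2 * m - 2 * s := by omega
    have h' : 2 * s ≤ 2 * m := by omega
    push_cast [Nat.cast_sub this, Nat.cast_sub h']
    ring
  unfold TT
  rw [poch_succ, poch_succ, Nat.factorial_succ, hfac, hc1, hc2]
  have hsfac : (Nat.factorial s : ℝ) ≠ 0 := by positivity
  push_cast
  field_simp
  ring

lemma TT_partial (m : ℕ) (hm : 1 ≤ m) : ∀ s, 1 ≤ s → s ≤ m →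
    (m : ℝ) * ∑ i ∈ Finset.range s, TT m i =
      -(((s : ℝ)) * (2 * m - 2 * s + 1)) * TT m s := by
  intro s
  induction s with
  | zero => intro h; omega
  | succ s ih =>
    intro _ hsm
    rcases Nat.eq_zero_or_pos s with rfl | hs1
    · -- base case s + 1 = 1
      have h := TT_ratio m 0 (by omega)
      have h2m : (2 * (m : ℝ)) ≠ 0 := by
        have : (0 : ℝ) < m := by exact_mod_cast hm
        positivity
      rw [Finset.sum_range_one]
      apply mul_left_cancel₀ h2m
      push_cast at h ⊢
      nlinarith [h]
    · have hsm' : s < m := by omega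
      have ih' := ih hs1 (by omega)
      have h := TT_ratio m s hsm'
      have hne : (2 * (m : ℝ) - 2 * s) ≠ 0 := by
        have : (s : ℝ) < m := by exact_mod_cast hsm'
        nlinarith
      rw [Finset.sum_range_succ, mul_add]
      apply mul_left_cancel₀ hne
      push_cast at ih' h ⊢
      nlinarith [ih', h]

lemma TT_sum (m : ℕ) (hm : 1 ≤ m) : ∑ s ∈ Finset.range (m + 1), TT m s = 0 := by
  have h := TT_partial m hm m hm le_rfl
  have hmne : (m : ℝ) ≠ 0 := Nat.cast_ne_zero.mpr (by omega)
  have h0 : (m : ℝ) * ∑ s ∈ Finset.range (m + 1), TT m s = (m : ℝ) * 0 := by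
    rw [Finset.sum_range_succ, mul_add, h]
    ring
  exact mul_left_cancel₀ hmne h0

/-- Vanishing of the extra term in the induction step of the partial-sum lemma. -/
theorem stmt_14 (N a : ℕ) (ha : 1 ≤ a) (haN : a < N) (hev : Even (N - a))
    (h2 : 2 ≤ N - a) :
    (∑ s ∈ Finset.range ((N - a) / 2 + 1),
        (2 : ℝ) ^ (-(N : ℤ) + a + 2 * s) * poch (-(1 / 2)) s *
          poch (-(((N : ℝ) - a)) / 2) s * poch (-(((N : ℝ) - a)) / 2) s *
          (Nat.factorial (N - a - 2 * s)) / (Nat.factorial s) =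
      (2 : ℝ) ^ (-(N : ℤ) + a) * (Nat.factorial (N - a)) *
        poch (((a : ℝ) - N + 2) / 2) ((N - a) / 2) /
          poch (((a : ℝ) - N + 1) / 2) ((N - a) / 2)) ∧
    (∑ s ∈ Finset.range ((N - a) / 2 + 1),
        (2 : ℝ) ^ (-(N : ℤ) + a + 2 * s) * poch (-(1 / 2)) s *
          poch (-(((N : ℝ) - a)) / 2) s * poch (-(((N : ℝ) - a)) / 2) s *
          (Nat.factorial (N - a - 2 * s)) / (Nat.factorial s) = 0) := by
  obtain ⟨m, hk⟩ : ∃ m, N - a = 2 * m := by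
    obtain ⟨r, hr⟩ := hev; exact ⟨r, by omega⟩
  have hm : 1 ≤ m := by omega
  have haN' : a ≤ N := haN.le
  have hNa : ((N : ℝ)) - a = 2 * m := by
    have : ((N - a : ℕ) : ℝ) = 2 * m := by exact_mod_cast congrArg (Nat.cast : ℕ → ℝ) hk
    rw [← this, Nat.cast_sub haN']
  have hd2 : (N - a) / 2 = m := by omega
  have hpz : poch (-(((N : ℝ) - a)) / 2) = poch (-(m : ℝ)) := by
    congr 1
    rw [hNa]; ring
  have hsum : ∑ s ∈ Finset.range ((N - a) / 2 + 1),
      (2 : ℝ) ^ (-(N : ℤ) + a + 2 * s) * poch (-(1 / 2)) s *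
        poch (-(((N : ℝ) - a)) / 2) s * poch (-(((N : ℝ) - a)) / 2) s *
        (Nat.factorial (N - a - 2 * s)) / (Nat.factorial s) =
      (2 : ℝ) ^ (-(N : ℤ) + a) * ∑ s ∈ Finset.range (m + 1), TT m s := by
    rw [hd2, Finset.mul_sum]
    refine Finset.sum_congr rfl fun s _ => ?_
    unfold TT
    rw [hpz, hk]
    have hzp : (2 : ℝ) ^ (-(N : ℤ) + a + 2 * s) =
        (2 : ℝ) ^ (-(N : ℤ) + a) * (4 : ℝ) ^ s := by
      rw [zpow_add₀ (two_ne_zero) (-(N : ℤ) + a) (2 * s)]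
      congr 1
      rw [show ((2 : ℤ) * s) = ((2 * s : ℕ) : ℤ) by push_cast; ring, zpow_natCast,
        pow_mul]
      norm_num
    rw [hzp]
    ring
  have hzero : ∑ s ∈ Finset.range ((N - a) / 2 + 1),
      (2 : ℝ) ^ (-(N : ℤ) + a + 2 * s) * poch (-(1 / 2)) s *
        poch (-(((N : ℝ) - a)) / 2) s * poch (-(((N : ℝ) - a)) / 2) s *
        (Nat.factorial (N - a - 2 * s)) / (Nat.factorial s) = 0 := by
    rw [hsum, TT_sum m hm, mul_zero]
  refine ⟨?_, hzero⟩
  rw [hzero]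
  obtain ⟨t, rfl⟩ : ∃ t, m = t + 1 := ⟨m - 1, by omega⟩
  have hpn : poch (((a : ℝ) - N + 2) / 2) ((N - a) / 2) = 0 := by
    have hx : ((a : ℝ) - N + 2) / 2 = -(t : ℝ) := by
      have : (N : ℝ) - a = 2 * (t + 1) := by rw [hNa]; push_cast; ring
      nlinarith [this]
    rw [hd2, hx]
    unfold poch
    rw [ascPochhammer_succ_eval]
    simp
  rw [hpn, mul_zero, zero_div]
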